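/- arXiv:1512.04637 — 3 statements merged into one kernel-verified Lean document; each statement's English description precedes it below -/
import Mathlib

section
/- Emergence of Prices: Let M ∈ 𝔐(m) with extended net-trade function ν. Then there is a unique map p : S₊ → ℝ₊₊^m/∼ (prices, i.e. strictly positive vectors up to positive scaling) satisfying value conservation: p(b)·ν(a,b) = 0 for every a ∈ S and b ∈ S₊. -/
open Finset

/-- An (abstract) exchange mechanism on the commodity set `{1,…,m}` (modelled as `Fin m`):
a finite index set `K = K₁ ⊔ ⋯ ⊔ K_m` (an index `h` belongs to `K_i` iff `ind h = i`),
together with, for every number `n` of traders, a return map `rho n`. -/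
structure ExchangeMechanism (m : ℕ) where
  K : Type
  fintypeK : Fintype K
  decEqK : DecidableEq K
  ind : K → Fin m
  rho : (n : ℕ) → (Fin n → K → ℝ) → Fin n → Fin m → ℝ

namespace ExchangeMechanism

variable {m : ℕ} (M : ExchangeMechanism m)

instance : Fintype M.K := M.fintypeK
instance : DecidableEq M.K := M.decEqK

/-- `a ∈ S = ℝ₊^K`. -/
def Nonneg (a : M.K → ℝ) : Prop := ∀ h, 0 ≤ a h

/-- `b ∈ S₊ = ℝ₊₊^K`. -/
def Pos (b : M.K → ℝ) : Prop := ∀ h, 0 < b h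

/-- `(a¹,…,aⁿ) ∈ S(n)`: an admissible tuple of offers (nonnegative, positive in aggregate). -/
def Valid (n : ℕ) (a : Fin n → M.K → ℝ) : Prop :=
  (∀ k, M.Nonneg (a k)) ∧ M.Pos (∑ k, a k)

/-- The aggregate `ā ∈ C = ℝ₊^m` of an offer `a`, `ā_i = Σ_{h ∈ K_i} a_h`. -/
def agg (a : M.K → ℝ) : Fin m → ℝ :=
  fun i => ∑ h ∈ Finset.univ.filter (fun h => M.ind h = i), a h

/-- Conservation of commodities: everything received is redistributed. -/
def Conserves : Prop :=
  ∀ n (a : Fin n → M.K → ℝ), M.Valid n a →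
    ∑ k, M.rho n a k = ∑ k, M.agg (a k)

/-- Anonymity. -/
def Anonymous : Prop :=
  ∀ n (a : Fin n → M.K → ℝ) (σ : Equiv.Perm (Fin n)), M.Valid n a →
    M.rho n (a ∘ σ) = (M.rho n a) ∘ σ

/-- Aggregation: merging the last two offers merges the last two returns. -/
def Aggregative : Prop :=
  ∀ n (a : Fin (n + 2) → M.K → ℝ), M.Valid (n + 2) a →
    M.rho (n + 1)
      (Fin.snoc (fun k : Fin n => a k.castSucc.castSucc)
        (a (Fin.castSucc (Fin.last n)) + a (Fin.last (n + 1)))) =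
      Fin.snoc (fun k : Fin n => M.rho (n + 2) a k.castSucc.castSucc)
        (M.rho (n + 2) a (Fin.castSucc (Fin.last n)) + M.rho (n + 2) a (Fin.last (n + 1)))

/-- The scaling action `(λ ∗ a)_h = λ_{i} a_h` for `h ∈ K_i` on offers. -/
def scaleS (lam : Fin m → ℝ) (a : M.K → ℝ) : M.K → ℝ := fun h => lam (M.ind h) * a h

/-- Invariance under change of units. -/
def Invariant : Prop :=
  ∀ n (a : Fin n → M.K → ℝ) (lam : Fin m → ℝ), (∀ i, 0 < lam i) → M.Valid n a →
    M.rho n (fun k => M.scaleS lam (a k)) = fun k i => lam i * M.rho n a k i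

/-- Non-dissipation: each net return `rᵏ − āᵏ` is `0` or has a strictly positive component. -/
def NonDissipative : Prop :=
  ∀ n (a : Fin n → M.K → ℝ), M.Valid n a → ∀ k,
    M.rho n a k = M.agg (a k) ∨ ∃ i, M.agg (a k) i < M.rho n a k i

/-- The two-trader return `ρ(a, b)`: the first component of `ρ²`. -/
def ret (a b : M.K → ℝ) : Fin m → ℝ := M.rho 2 ![a, b] 0

/-- The unit offer `e_h`. -/
def unit (h : M.K) : M.K → ℝ := Pi.single h 1

/-- `h ∈ K_i` is an `ij`-index: some offer of the others yields a positive return of `j`. -/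
def IsIJIndex (i j : Fin m) (h : M.K) : Prop :=
  M.ind h = i ∧ ∃ a, M.Valid 2 ![M.unit h, a] ∧ 0 < M.ret (M.unit h) a j

/-- A pure `ij`-index: the return to `e_h` is always exclusively in commodity `j`. -/
def IsPureIJIndex (i j : Fin m) (h : M.K) : Prop :=
  M.IsIJIndex i j h ∧
    ∀ a, M.Valid 2 ![M.unit h, a] → ∀ k, k ≠ j → M.ret (M.unit h) a k = 0

/-- Flexibility: whenever there is an `ij`-index there is a pure `ij`-index. -/
def Flexible : Prop :=
  ∀ i j : Fin m, (∃ h, M.IsIJIndex i j h) → ∃ h, M.IsPureIJIndex i j h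

/-- The trade function `r(a,b) = ρ(a, b − a)` (for `a ≤ b`, `b ∈ S₊`). -/
def trade (a b : M.K → ℝ) : Fin m → ℝ := M.ret a (b - a)

/-- The net-trade function `ν(a,b) = r(a,b) − ā` (for `a ≤ b`, `b ∈ S₊`). -/
def nu (a b : M.K → ℝ) : Fin m → ℝ := M.trade a b - M.agg a

/-- `nu'` is an extension of the net-trade function `ν` to all of `S × S₊` which is
homogeneous of degree 1 in the offer and of degree 0 in the market state. -/
def IsNuExtension (nu' : (M.K → ℝ) → (M.K → ℝ) → Fin m → ℝ) : Prop :=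
  (∀ a b, M.Nonneg a → M.Pos b → a ≤ b → nu' a b = M.nu a b) ∧
  (∀ a b (t : ℝ), M.Nonneg a → M.Pos b → 0 < t → nu' (t • a) b = t • nu' a b) ∧
  (∀ a b (t : ℝ), M.Nonneg a → M.Pos b → 0 < t → nu' a (t • b) = nu' a b)


/-- `v → w`: the bundle `v` can be converted to `w` (relative to the extended
net-trade function `nu'`). -/
def Converts (nu' : (M.K → ℝ) → (M.K → ℝ) → Fin m → ℝ) (v w : Fin m → ℝ) : Prop :=
  ∃ a b, M.Nonneg a ∧ M.Pos b ∧ M.agg a ≤ v ∧ w = v + nu' a b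

/-- `v` can be converted to `w` in exactly `t` steps. -/
def ConvertsIn (nu' : (M.K → ℝ) → (M.K → ℝ) → Fin m → ℝ) (t : ℕ)
    (v w : Fin m → ℝ) : Prop :=
  ∃ f : Fin (t + 1) → Fin m → ℝ, f 0 = v ∧ f (Fin.last t) = w ∧
    ∀ k : Fin t, M.Converts nu' (f k.castSucc) (f k.succ)

/-- Connectedness: each `e_i` converts to each `e_j` in finitely many steps,
i.e. `τ(M) < ∞`. -/
def Connected (nu' : (M.K → ℝ) → (M.K → ℝ) → Fin m → ℝ) : Prop :=
  ∀ i j : Fin m, i ≠ j →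
    ∃ t : ℕ, M.ConvertsIn nu' t (Pi.single i 1) (Pi.single j 1)

/-- `M ∈ 𝔐(m)` (relative to a chosen extension `nu'` of its net-trade function):
`M` is connected and satisfies Anonymity, Aggregation, Invariance, Non-dissipation
and Flexibility. -/
def MemM (nu' : (M.K → ℝ) → (M.K → ℝ) → Fin m → ℝ) : Prop :=
  M.Conserves ∧ M.Anonymous ∧ M.Aggregative ∧ M.Invariant ∧ M.NonDissipative ∧
    M.Flexible ∧ M.IsNuExtension nu' ∧ M.Connected nu'

end ExchangeMechanism

/-!
Conservation, anonymity and aggregation make the net trade `ν(·, b)` additive, hence determined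
by the elementary net trades `ν(e_h, b)`. Since `∑ h, b_h • ν(e_h, b) = ν(b, b) = 0`, every vector
of their span `W` is itself a net trade, so by non-dissipation `W` meets the nonnegative orthant
only in `0`; separating `W` from the standard simplex yields a strictly positive price vector
orthogonal to `W`.

For uniqueness, a pure `ij`-index has net trade `c • e_j - e_i` with `c > 0`, which pins down the
price ratio `p_i / p_j`. By flexibility it suffices that any two commodities are joined by a chain
of `ij`-indices; otherwise no chain of conversions starting at `e_i` could ever deliver a
commodity outside those reachable from `i`, contradicting connectedness.
-/

open Filter Topology

lemma exists_pos_smul_le {ι : Type*} [Finite ι] (a : ι → ℝ) {b : ι → ℝ} (hb : ∀ i, 0 < b i) :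
    ∃ t : ℝ, 0 < t ∧ t • a ≤ b := by
  have hsmall : ∀ᶠ t in 𝓝[>] (0 : ℝ), ∀ i, t * a i < b i :=
    nhdsWithin_le_nhds <| eventually_all.2 fun i =>
      ((continuous_id.mul continuous_const).tendsto' 0 0 (by simp)).eventually
        (gt_mem_nhds (hb i))
  obtain ⟨t, hlt, ht⟩ := (hsmall.and self_mem_nhdsWithin).exists
  exact ⟨t, ht, fun i => (hlt i).le⟩

lemma eq_sum_smul_single_of_add_of_smul {ι E : Type*} [Fintype ι] [DecidableEq ι]
    [AddCommGroup E] [Module ℝ E] (f : (ι → ℝ) → E)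
    (hadd : ∀ x y, 0 ≤ x → 0 ≤ y → f (x + y) = f x + f y)
    (hsmul : ∀ (c : ℝ) x, 0 < c → 0 ≤ x → f (c • x) = c • f x) {a : ι → ℝ} (ha : 0 ≤ a) :
    f a = ∑ i, a i • f (Pi.single i 1) := by
  have hzero : f 0 = 0 := by simpa using hadd 0 0 le_rfl le_rfl
  have hsingle : ∀ i, f (Pi.single i (a i)) = a i • f (Pi.single i 1) := fun i => by
    rcases (ha i).eq_or_lt with h | h
    · simp [← h, hzero]
    · rw [← hsmul _ _ h (Pi.single_nonneg.2 zero_le_one), ← Pi.single_smul, smul_eq_mul,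
        mul_one]
  have hsum (s : Finset ι) :
      f (∑ i ∈ s, Pi.single i (a i)) = ∑ i ∈ s, a i • f (Pi.single i 1) := by
    induction s using Finset.induction_on with
    | empty => simpa using hzero
    | insert i s hi ih =>
      rw [Finset.sum_insert hi, Finset.sum_insert hi, hadd _ _ (Pi.single_nonneg.2 (ha i))
        (Finset.sum_nonneg fun j _ => Pi.single_nonneg.2 (ha j)), hsingle, ih]
  simpa [Finset.univ_sum_single] using hsum Finset.univ

/-- Stiemke's lemma. -/
theorem Submodule.exists_pos_sum_mul_eq_zero {ι : Type*} [Fintype ι] (W : Submodule ℝ (ι → ℝ))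
    (hW : ∀ x ∈ W, 0 ≤ x → x = 0) :
    ∃ p : ι → ℝ, (∀ i, 0 < p i) ∧ ∀ x ∈ W, ∑ i, p i * x i = 0 := by
  classical
  have hdisj : Disjoint (W : Set (ι → ℝ)) (stdSimplex ℝ ι) := by
    refine Set.disjoint_left.2 fun x hxW hx => ?_
    have := hx.2
    simp [hW x hxW hx.1] at this
  obtain ⟨f, u, v, hfW, huv, hfS⟩ := geometric_hahn_banach_closed_compact W.convex
    (Submodule.closed_of_finiteDimensional W) (convex_stdSimplex ℝ ι) (isCompact_stdSimplex ℝ ι)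
    hdisj
  have hu : 0 < u := by simpa using hfW 0 W.zero_mem
  have hf : ∀ x ∈ W, f x = 0 := by
    intro x hx
    by_contra hne
    have := hfW ((u / f x) • x) (W.smul_mem _ hx)
    rw [map_smul, smul_eq_mul, div_mul_cancel₀ _ hne] at this
    exact this.false
  refine ⟨fun i => f (Pi.single i 1),
    fun i => hu.trans (huv.trans (hfS _ (single_mem_stdSimplex ℝ i))), fun x hx => ?_⟩
  conv_rhs => rw [← hf x hx, ← Finset.univ_sum_single x]
  rw [map_sum]
  refine Finset.sum_congr rfl fun i _ => ?_
  rw [mul_comm, ← smul_eq_mul, ← map_smul, ← Pi.single_smul, smul_eq_mul, mul_one]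

namespace ExchangeMechanism

variable {m : ℕ} {M : ExchangeMechanism m} {nu' : (M.K → ℝ) → (M.K → ℝ) → Fin m → ℝ}

lemma Nonneg.add {a a' : M.K → ℝ} (ha : M.Nonneg a) (ha' : M.Nonneg a') : M.Nonneg (a + a') :=
  fun h => add_nonneg (ha h) (ha' h)

lemma Nonneg.smul {a : M.K → ℝ} (ha : M.Nonneg a) {t : ℝ} (ht : 0 ≤ t) : M.Nonneg (t • a) :=
  fun h => mul_nonneg ht (ha h)

lemma nonneg_zero : M.Nonneg 0 := fun _ => le_rfl

lemma Pos.nonneg {b : M.K → ℝ} (hb : M.Pos b) : M.Nonneg b := fun h => (hb h).le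

lemma unit_nonneg (h : M.K) : M.Nonneg (M.unit h) := fun k => by
  by_cases hk : k = h <;> simp [unit, hk]

lemma agg_add (x y : M.K → ℝ) : M.agg (x + y) = M.agg x + M.agg y := by
  funext i
  simp [agg, Finset.sum_add_distrib]

lemma agg_zero : M.agg 0 = 0 := by
  funext i
  simp [agg]

lemma le_agg {a : M.K → ℝ} (ha : M.Nonneg a) (h : M.K) : a h ≤ M.agg a (M.ind h) :=
  Finset.single_le_sum (fun h' _ => ha h') (by simp)

lemma agg_unit (h : M.K) : M.agg (M.unit h) = Pi.single (M.ind h) 1 := by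
  funext i
  by_cases hi : M.ind h = i
  · subst hi
    simp [agg, unit, Pi.single_apply]
  · simp [agg, unit, Pi.single_apply, hi, Ne.symm hi]

lemma valid_two {x y : M.K → ℝ} (hx : M.Nonneg x) (hy : M.Nonneg y) (hxy : M.Pos (x + y)) :
    M.Valid 2 ![x, y] :=
  ⟨Fin.forall_fin_two.2 ⟨hx, hy⟩, by simpa [Fin.sum_univ_two] using hxy⟩

lemma valid_three {x y z : M.K → ℝ} (hx : M.Nonneg x) (hy : M.Nonneg y) (hz : M.Nonneg z)
    (hxyz : M.Pos (x + y + z)) : M.Valid 3 ![x, y, z] :=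
  ⟨Fin.forall_fin_succ.2 ⟨hx, Fin.forall_fin_two.2 ⟨hy, hz⟩⟩,
    by simpa [Fin.sum_univ_three] using hxyz⟩

lemma Anonymous.rho_swap (hA : M.Anonymous) {n : ℕ} {a w : Fin n → M.K → ℝ} (ha : M.Valid n a)
    (i j : Fin n) (hw : a ∘ Equiv.swap i j = w) : M.rho n w i = M.rho n a j := by
  simpa [hw] using congrFun (hA n a (Equiv.swap i j) ha) i

lemma Aggregative.rho_three_zero (hG : M.Aggregative) {x y z : M.K → ℝ}
    (hv : M.Valid 3 ![x, y, z]) : M.rho 3 ![x, y, z] 0 = M.ret x (y + z) := by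
  have hsnoc : (Fin.snoc (fun k : Fin 1 => ![x, y, z] k.castSucc.castSucc) (y + z) :
      Fin 2 → M.K → ℝ) = ![x, y + z] := by
    funext k; fin_cases k <;> rfl
  simpa [ret, hsnoc] using (congrFun (hG 1 _ hv) 0).symm

lemma ret_add_ret (hC : M.Conserves) (hA : M.Anonymous) {x y : M.K → ℝ}
    (hv : M.Valid 2 ![x, y]) : M.ret x y + M.ret y x = M.agg x + M.agg y := by
  have hswap : M.ret y x = M.rho 2 ![x, y] 1 :=
    hA.rho_swap hv 0 1 (by funext k; fin_cases k <;> rfl)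
  rw [hswap]
  simpa [ret, Fin.sum_univ_two] using hC 2 _ hv

lemma ret_add_ret_add_ret (hC : M.Conserves) (hA : M.Anonymous) (hG : M.Aggregative)
    {x y z : M.K → ℝ} (hx : M.Nonneg x) (hy : M.Nonneg y) (hz : M.Nonneg z)
    (hxyz : M.Pos (x + y + z)) :
    M.ret x (y + z) + M.ret y (x + z) + M.ret z (x + y) = M.agg x + M.agg y + M.agg z := by
  have hv := valid_three hx hy hz hxyz
  have hretx : M.ret x (y + z) = M.rho 3 ![x, y, z] 0 := (hG.rho_three_zero hv).symm
  have hrety : M.ret y (x + z) = M.rho 3 ![x, y, z] 1 := by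
    rw [← hA.rho_swap hv 0 1 (w := ![y, x, z]) (by funext k; fin_cases k <;> rfl),
      hG.rho_three_zero (valid_three hy hx hz (by rwa [add_comm y]))]
  have hretz : M.ret z (x + y) = M.rho 3 ![x, y, z] 2 := by
    rw [← hA.rho_swap hv 0 2 (w := ![z, y, x]) (by funext k; fin_cases k <;> rfl),
      hG.rho_three_zero (valid_three hz hy hx (by rwa [add_comm, add_comm z, ← add_assoc])),
      add_comm y]
  simpa [hretx, hrety, hretz, Fin.sum_univ_three] using hC 3 _ hv

lemma nu_add (hC : M.Conserves) (hA : M.Anonymous) (hG : M.Aggregative) {a a' b : M.K → ℝ}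
    (ha : M.Nonneg a) (ha' : M.Nonneg a') (hb : M.Pos b) (hab : a + a' ≤ b) :
    M.nu (a + a') b = M.nu a b + M.nu a' b := by
  set z := b - (a + a') with hz
  have hznn : M.Nonneg z := fun h => sub_nonneg.2 (hab h)
  have hbz : a + a' + z = b := by rw [hz]; abel
  have h2 := ret_add_ret hC hA (valid_two (ha.add ha') hznn (hbz ▸ hb))
  have h3 := ret_add_ret_add_ret hC hA hG ha ha' hznn (hbz ▸ hb)
  simp only [nu, trade]
  rw [← hz, show b - a = a' + z by rw [← hbz]; abel, show b - a' = a + z by rw [← hbz]; abel,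
    agg_add]
  rw [agg_add] at h2
  linear_combination h2 - h3

lemma nu_zero (hC : M.Conserves) (hA : M.Anonymous) (hG : M.Aggregative) {b : M.K → ℝ}
    (hb : M.Pos b) : M.nu 0 b = 0 := by
  simpa using nu_add hC hA hG nonneg_zero nonneg_zero hb (by rw [add_zero]; exact hb.nonneg)

lemma nu_self (hC : M.Conserves) (hA : M.Anonymous) (hG : M.Aggregative) {b : M.K → ℝ}
    (hb : M.Pos b) : M.nu b b = 0 := by
  have h2 := ret_add_ret hC hA (valid_two hb.nonneg nonneg_zero (by simpa using hb))
  have h0 := nu_zero hC hA hG hb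
  simp only [nu, trade, sub_self, sub_zero, agg_zero] at h0 h2 ⊢
  rw [h0, add_zero, add_zero] at h2
  rw [h2, sub_self]

lemma NonDissipative.nu_eq_zero_or_exists_pos (hND : M.NonDissipative) {a b : M.K → ℝ}
    (ha : M.Nonneg a) (hb : M.Pos b) (hab : a ≤ b) : M.nu a b = 0 ∨ ∃ i, 0 < M.nu a b i := by
  have hv : M.Valid 2 ![a, b - a] :=
    valid_two ha (fun h => sub_nonneg.2 (hab h)) (by simpa using hb)
  simpa [nu, trade, ret, sub_eq_zero] using hND 2 _ hv 0

namespace IsNuExtension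

lemma smul_eq_nu (hE : M.IsNuExtension nu') {a b : M.K → ℝ} (ha : M.Nonneg a) (hb : M.Pos b)
    {t : ℝ} (ht : 0 < t) (hle : t • a ≤ b) : t • nu' a b = M.nu (t • a) b := by
  rw [← hE.2.1 a b t ha hb ht, hE.1 (t • a) b (ha.smul ht.le) hb hle]

lemma add_left (hC : M.Conserves) (hA : M.Anonymous) (hG : M.Aggregative)
    (hE : M.IsNuExtension nu') {a a' b : M.K → ℝ} (ha : M.Nonneg a) (ha' : M.Nonneg a')
    (hb : M.Pos b) : nu' (a + a') b = nu' a b + nu' a' b := by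
  obtain ⟨t, ht, hle⟩ := exists_pos_smul_le (a + a') hb
  have hle_a : t • a ≤ b :=
    (smul_le_smul_of_nonneg_left (le_add_of_nonneg_right ha') ht.le).trans hle
  have hle_a' : t • a' ≤ b :=
    (smul_le_smul_of_nonneg_left (le_add_of_nonneg_left ha) ht.le).trans hle
  refine smul_right_injective _ ht.ne' ?_
  calc t • nu' (a + a') b = M.nu (t • a + t • a') b := by
        rw [hE.smul_eq_nu (ha.add ha') hb ht hle, smul_add]
    _ = M.nu (t • a) b + M.nu (t • a') b :=
        nu_add hC hA hG (ha.smul ht.le) (ha'.smul ht.le) hb (by rwa [← smul_add])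
    _ = t • (nu' a b + nu' a' b) := by
        rw [smul_add, hE.smul_eq_nu ha hb ht hle_a, hE.smul_eq_nu ha' hb ht hle_a']

lemma eq_sum (hC : M.Conserves) (hA : M.Anonymous) (hG : M.Aggregative)
    (hE : M.IsNuExtension nu') {a b : M.K → ℝ} (ha : M.Nonneg a) (hb : M.Pos b) :
    nu' a b = ∑ h, a h • nu' (M.unit h) b :=
  eq_sum_smul_single_of_add_of_smul (nu' · b) (fun _ _ hx hy => hE.add_left hC hA hG hx hy hb)
    (fun _ _ hc hx => hE.2.1 _ b _ hx hb hc) ha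

lemma self (hC : M.Conserves) (hA : M.Anonymous) (hG : M.Aggregative)
    (hE : M.IsNuExtension nu') {b : M.K → ℝ} (hb : M.Pos b) : nu' b b = 0 := by
  rw [hE.1 b b hb.nonneg hb le_rfl, nu_self hC hA hG hb]

lemma eq_zero_or_exists_pos (hND : M.NonDissipative) (hE : M.IsNuExtension nu')
    {a b : M.K → ℝ} (ha : M.Nonneg a) (hb : M.Pos b) : nu' a b = 0 ∨ ∃ i, 0 < nu' a b i := by
  obtain ⟨t, ht, hle⟩ := exists_pos_smul_le a hb
  have h := hND.nu_eq_zero_or_exists_pos (ha.smul ht.le) hb hle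
  rw [← hE.smul_eq_nu ha hb ht hle] at h
  simpa [smul_eq_zero, ht.ne', mul_pos_iff_of_pos_left ht] using h

lemma eq_zero_of_nonneg (hC : M.Conserves) (hA : M.Anonymous) (hG : M.Aggregative)
    (hND : M.NonDissipative) (hE : M.IsNuExtension nu') {a b : M.K → ℝ} (ha : M.Nonneg a)
    (hb : M.Pos b) (hnu : 0 ≤ nu' a b) : nu' a b = 0 := by
  obtain ⟨t, ht, hle⟩ := exists_pos_smul_le a hb
  have hrest : M.Nonneg (b - t • a) := fun h => sub_nonneg.2 (hle h)
  -- the rest of the market, `b - t • a`, trades `-t • nu' a b`, which has no positive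
  -- component
  have hsplit : t • nu' a b + nu' (b - t • a) b = 0 := by
    rw [← hE.2.1 a b t ha hb ht, ← hE.add_left hC hA hG (ha.smul ht.le) hrest hb,
      add_sub_cancel, hE.self hC hA hG hb]
  rcases hE.eq_zero_or_exists_pos hND hrest hb with h0 | ⟨i, hi⟩
  · rw [h0, add_zero, smul_eq_zero] at hsplit
    exact hsplit.resolve_left ht.ne'
  · have := congrFun hsplit i
    simp only [Pi.add_apply, Pi.smul_apply, smul_eq_mul, Pi.zero_apply] at this
    linarith [mul_nonneg ht.le (hnu i)]

lemma exists_apply_unit_eq_ret_sub (hE : M.IsNuExtension nu') (h : M.K) {b : M.K → ℝ}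
    (hb : M.Pos b) : ∃ a, M.Valid 2 ![M.unit h, a] ∧
      nu' (M.unit h) b = M.ret (M.unit h) a - Pi.single (M.ind h) 1 := by
  -- degree-0 homogeneity in the market state lets us rescale `b` so that `e_h ≤ b`
  set b' := (b h)⁻¹ • b
  have hb' : M.Pos b' := fun k => mul_pos (inv_pos.2 (hb h)) (hb k)
  have hunit := unit_nonneg (M := M) h
  have hle : M.unit h ≤ b' := by
    intro k
    rcases eq_or_ne k h with rfl | hk
    · simp [unit, b', (hb k).ne']
    · simpa [unit, hk] using (hb' k).le
  refine ⟨b' - M.unit h,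
    valid_two hunit (fun k => sub_nonneg.2 (hle k)) (by simpa using hb'), ?_⟩
  rw [← hE.2.2 _ b _ hunit hb (inv_pos.2 (hb h)), hE.1 _ _ hunit hb' hle, nu, trade, agg_unit]

lemma isIJIndex_of_pos (hE : M.IsNuExtension nu') {h : M.K} {b : M.K → ℝ} (hb : M.Pos b)
    {j : Fin m} (hj : j ≠ M.ind h) (hpos : 0 < nu' (M.unit h) b j) :
    M.IsIJIndex (M.ind h) j h := by
  obtain ⟨a, hv, hnu⟩ := hE.exists_apply_unit_eq_ret_sub h hb
  exact ⟨rfl, a, hv, by simpa [hnu, hj] using hpos⟩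

end IsNuExtension

lemma IsPureIJIndex.exists_nu'_unit_eq (hND : M.NonDissipative) (hE : M.IsNuExtension nu')
    {i j : Fin m} (hij : i ≠ j) {h : M.K} (hp : M.IsPureIJIndex i j h) {b : M.K → ℝ}
    (hb : M.Pos b) :
    ∃ c : ℝ, 0 < c ∧ nu' (M.unit h) b = c • Pi.single j 1 - Pi.single i 1 := by
  obtain ⟨a, hv, hnu⟩ := hE.exists_apply_unit_eq_ret_sub h hb
  have hform : nu' (M.unit h) b = M.ret (M.unit h) a j • Pi.single j 1 - Pi.single i 1 := by
    rw [hnu, hp.1.1]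
    funext k
    rcases eq_or_ne k j with rfl | hk
    · simp
    · simp [hp.2 a hv k hk, hk]
  refine ⟨_, ?_, hform⟩
  rcases hE.eq_zero_or_exists_pos hND (unit_nonneg h) hb with h0 | ⟨k, hk⟩
  · simpa [hij] using congrFun (hform.symm.trans h0) i
  · rw [hform] at hk
    rcases eq_or_ne k j with rfl | hkj
    · simpa [hij.symm] using hk
    · by_cases hki : k = i <;> norm_num [hkj, hki, hij] at hk

def HasIJIndex (M : ExchangeMechanism m) (i j : Fin m) : Prop := ∃ h, M.IsIJIndex i j h

def IsPriceAt (M : ExchangeMechanism m) (nu' : (M.K → ℝ) → (M.K → ℝ) → Fin m → ℝ)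
    (b : M.K → ℝ) (p : Fin m → ℝ) : Prop :=
  (∀ i, 0 < p i) ∧ ∀ a, M.Nonneg a → ∑ i, p i * nu' a b i = 0

lemma Converts.nonpos_of_notMem (hC : M.Conserves) (hA : M.Anonymous) (hG : M.Aggregative)
    (hE : M.IsNuExtension nu') {R : Set (Fin m)}
    (hR : ∀ h k, M.ind h ∈ R → M.IsIJIndex (M.ind h) k h → k ∈ R) {v w : Fin m → ℝ}
    (hvw : M.Converts nu' v w) (hv : ∀ k ∉ R, v k ≤ 0) : ∀ k ∉ R, w k ≤ 0 := by
  obtain ⟨a, b, ha, hb, hav, rfl⟩ := hvw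
  intro k hk
  have ha0 : ∀ h, M.ind h ∉ R → a h = 0 := fun h hh =>
    le_antisymm ((le_agg ha h).trans ((hav _).trans (hv _ hh))) (ha h)
  have hunit : ∀ h, M.ind h ∈ R → nu' (M.unit h) b k ≤ 0 := fun h hh => by
    by_contra! hpos
    exact hk (hR h k hh (hE.isIJIndex_of_pos hb (fun hkh => hk (hkh ▸ hh)) hpos))
  have hnu : nu' a b k ≤ 0 := by
    rw [hE.eq_sum hC hA hG ha hb, Finset.sum_apply]
    refine Finset.sum_nonpos fun h _ => ?_
    by_cases hh : M.ind h ∈ R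
    · exact mul_nonpos_of_nonneg_of_nonpos (ha h) (hunit h hh)
    · simp [ha0 h hh]
  simpa using add_nonpos (hv k hk) hnu

lemma ConvertsIn.nonpos_of_notMem (hC : M.Conserves) (hA : M.Anonymous) (hG : M.Aggregative)
    (hE : M.IsNuExtension nu') {R : Set (Fin m)}
    (hR : ∀ h k, M.ind h ∈ R → M.IsIJIndex (M.ind h) k h → k ∈ R) {t : ℕ} {v w : Fin m → ℝ}
    (hvw : M.ConvertsIn nu' t v w) (hv : ∀ k ∉ R, v k ≤ 0) : ∀ k ∉ R, w k ≤ 0 := by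
  obtain ⟨f, rfl, rfl, hf⟩ := hvw
  exact Fin.induction hv (fun l ih => (hf l).nonpos_of_notMem hC hA hG hE hR ih) (Fin.last t)

lemma Connected.reflTransGen_hasIJIndex (hC : M.Conserves) (hA : M.Anonymous)
    (hG : M.Aggregative) (hE : M.IsNuExtension nu') (hConn : M.Connected nu') (i j : Fin m) :
    Relation.ReflTransGen M.HasIJIndex i j := by
  rcases eq_or_ne i j with rfl | hij
  · exact .refl
  by_contra hj
  obtain ⟨t, hchain⟩ := hConn i j hij
  -- nothing can be delivered outside the commodities reachable from `i`
  have := hchain.nonpos_of_notMem hC hA hG hE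
    (R := {k | Relation.ReflTransGen M.HasIJIndex i k}) (fun h k hh hk => hh.tail ⟨h, hk⟩)
    (fun k hk => by
      have hki : k ≠ i := fun hki => hk (hki ▸ .refl)
      simp [hki]) j hj
  norm_num at this

lemma div_eq_div_of_hasIJIndex (hND : M.NonDissipative) (hFl : M.Flexible)
    (hE : M.IsNuExtension nu') {b : M.K → ℝ} (hb : M.Pos b) {p q : Fin m → ℝ}
    (hp : M.IsPriceAt nu' b p) (hq : M.IsPriceAt nu' b q) {i j : Fin m}
    (hij : M.HasIJIndex i j) : q i / p i = q j / p j := by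
  rcases eq_or_ne i j with rfl | hne
  · rfl
  obtain ⟨h, hpure⟩ := hFl i j hij
  obtain ⟨c, hc, hnu⟩ := hpure.exists_nu'_unit_eq hND hE hne hb
  have hval : ∀ r : Fin m → ℝ, ∑ k, r k * nu' (M.unit h) b k = c * r j - r i := fun r => by
    simp [hnu, mul_sub, Finset.sum_sub_distrib, Pi.single_apply, mul_comm]
  have hpi : p i = c * p j := by linarith [hval p, hp.2 _ (unit_nonneg h)]
  have hqi : q i = c * q j := by linarith [hval q, hq.2 _ (unit_nonneg h)]
  rw [hpi, hqi, mul_div_mul_left _ _ hc.ne']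

lemma exists_isPriceAt (hC : M.Conserves) (hA : M.Anonymous) (hG : M.Aggregative)
    (hND : M.NonDissipative) (hE : M.IsNuExtension nu') {b : M.K → ℝ} (hb : M.Pos b) :
    ∃ p, M.IsPriceAt nu' b p := by
  set W := Submodule.span ℝ (Set.range fun h => nu' (M.unit h) b)
  have hmem : ∀ a, M.Nonneg a → nu' a b ∈ W := fun a ha => by
    rw [hE.eq_sum hC hA hG ha hb]
    exact W.sum_mem fun h _ => W.smul_mem _ (Submodule.subset_span ⟨h, rfl⟩)
  have hW : ∀ x ∈ W, 0 ≤ x → x = 0 := by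
    intro x hx hx0
    obtain ⟨c, rfl⟩ := Submodule.mem_span_range_iff_exists_fun ℝ |>.1 hx
    obtain ⟨t, ht, htc⟩ := exists_pos_smul_le (-c) hb
    have ha : M.Nonneg (c + t⁻¹ • b) := fun h => by
      have hch : 0 ≤ t * c h + b h := by
        linarith [show t * -c h ≤ b h from htc h]
      have := mul_nonneg (inv_pos.2 ht).le hch
      rwa [mul_add, inv_mul_cancel_left₀ ht.ne'] at this
    -- `∑ h, b h • nu' (M.unit h) b = nu' b b = 0`, so shifting `c` by a multiple of `b`
    -- turns it into an offer without changing the net trade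
    have hsum : ∑ h, b h • nu' (M.unit h) b = 0 :=
      (hE.eq_sum hC hA hG hb.nonneg hb).symm.trans (hE.self hC hA hG hb)
    have hnu : nu' (c + t⁻¹ • b) b = ∑ h, c h • nu' (M.unit h) b := by
      simp [hE.eq_sum hC hA hG ha hb, add_smul, Finset.sum_add_distrib, mul_smul,
        ← Finset.smul_sum, hsum]
    rw [← hnu] at hx0 ⊢
    exact hE.eq_zero_of_nonneg hC hA hG hND ha hb hx0
  obtain ⟨p, hp, hpW⟩ := W.exists_pos_sum_mul_eq_zero hW
  exact ⟨p, hp, fun a ha => hpW _ (hmem a ha)⟩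

lemma IsPriceAt.exists_pos_eq_smul (hC : M.Conserves) (hA : M.Anonymous) (hG : M.Aggregative)
    (hND : M.NonDissipative) (hFl : M.Flexible) (hE : M.IsNuExtension nu')
    (hConn : M.Connected nu') {b : M.K → ℝ} (hb : M.Pos b) {p q : Fin m → ℝ}
    (hp : M.IsPriceAt nu' b p) (hq : M.IsPriceAt nu' b q) : ∃ c : ℝ, 0 < c ∧ q = c • p := by
  rcases isEmpty_or_nonempty (Fin m) with hm | ⟨⟨i⟩⟩
  · exact ⟨1, one_pos, Subsingleton.elim _ _⟩
  have hratio : ∀ j, q i / p i = q j / p j := fun j => by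
    induction hConn.reflTransGen_hasIJIndex hC hA hG hE i j with
    | refl => rfl
    | tail _ hjk ih => exact ih.trans (div_eq_div_of_hasIJIndex hND hFl hE hb hp hq hjk)
  refine ⟨q i / p i, div_pos (hq.1 i) (hp.1 i), funext fun j => ?_⟩
  rw [hratio j, Pi.smul_apply, smul_eq_mul, div_mul_cancel₀ _ (hp.1 j).ne']

end ExchangeMechanism

/-- Emergence of Prices.  Let `M ∈ 𝔐(m)` with extended net-trade function
`ν`.  Then there is a unique map `p : S₊ → ℝ₊₊^m/∼` (strictly positive price vectors, up to
positive scaling) satisfying value conservation: `p(b)·ν(a,b) = 0` for every `a ∈ S`,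
`b ∈ S₊`. -/
theorem emergence_of_prices {m : ℕ} (M : ExchangeMechanism m)
    (nu' : (M.K → ℝ) → (M.K → ℝ) → Fin m → ℝ) (hM : M.MemM nu') :
    ∃ p : (M.K → ℝ) → Fin m → ℝ,
      ((∀ b, M.Pos b → ∀ i, 0 < p b i) ∧
        (∀ a b, M.Nonneg a → M.Pos b → ∑ i, p b i * nu' a b i = 0)) ∧
      ∀ q : (M.K → ℝ) → Fin m → ℝ,
        ((∀ b, M.Pos b → ∀ i, 0 < q b i) ∧
          (∀ a b, M.Nonneg a → M.Pos b → ∑ i, q b i * nu' a b i = 0)) →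
        ∀ b, M.Pos b → ∃ c : ℝ, 0 < c ∧ q b = c • p b := by
  obtain ⟨hC, hA, hG, -, hND, hFl, hE, hConn⟩ := hM
  choose! p hp using fun b (hb : M.Pos b) =>
    ExchangeMechanism.exists_isPriceAt hC hA hG hND hE hb
  refine ⟨p, ⟨fun b hb => (hp b hb).1, fun a b ha hb => (hp b hb).2 a ha⟩, fun q hq b hb => ?_⟩
  exact (hp b hb).exists_pos_eq_smul hC hA hG hND hFl hE hConn hb
    ⟨hq.1 b hb, fun a ha => hq.2 a b ha hb⟩
end

section
/- Let G be a connected directed graph without loops on vertex set {1,…,m}, and let b = (b_ij) be a nonnegative m×m matrix with b_ij > 0 for every edge ij ∈ G and b_ij = 0 for ij ∉ G. Then there exists a strictly positive vector p ∈ ℝ₊₊^m, unique up to multiplication by a positive scalar, satisfying Σ_i p_i·b_ij = Σ_i p_j·b_ji for all j = 1,…,m. -/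
/-!
The balance equations say that `p` lies in the kernel of the linear map `netInflow b` (inflow
minus outflow at each vertex, for the flows `p i * b i j`), whose coordinates always sum to zero. So `netInflow b` is not surjective, hence (being an endomorphism
of a finite-dimensional space) not injective, and it has a nonzero kernel vector `p`. By the
triangle inequality `netInflow b |p| ≥ 0` coordinatewise, and since the coordinates sum to zero,
`|p|` is a kernel vector too. A nonnegative kernel vector vanishing at `j` vanishes at every
`i` with `b i j > 0` (all inflow into `j` is zero), so by connectivity it is either zero or
strictly positive. Uniqueness: for positive kernel vectors `p`, `q` and `c = min q / p`, the
vector `q - c • p` is a nonnegative kernel vector with a zero coordinate, hence zero.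
-/

open Finset Relation

namespace GraphPrice

variable {ι : Type*} [Fintype ι] (b : ι → ι → ℝ)

noncomputable def netInflow : (ι → ℝ) →ₗ[ℝ] (ι → ℝ) where
  toFun p j := ∑ i, p i * b i j - p j * ∑ i, b j i
  map_add' p q := by
    funext j
    simp only [Pi.add_apply, add_mul, sum_add_distrib]
    ring
  map_smul' c p := by
    funext j
    simp only [Pi.smul_apply, smul_eq_mul, RingHom.id_apply, mul_sub, mul_sum, mul_assoc]

lemma netInflow_apply (p : ι → ℝ) (j : ι) :
    netInflow b p j = ∑ i, p i * b i j - p j * ∑ i, b j i := rfl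

lemma netInflow_eq_zero_iff (p : ι → ℝ) :
    netInflow b p = 0 ↔ ∀ j, ∑ i, p i * b i j = ∑ i, p j * b j i := by
  simp only [funext_iff, Pi.zero_apply, netInflow_apply, sub_eq_zero, mul_sum]

lemma sum_netInflow (p : ι → ℝ) : ∑ j, netInflow b p j = 0 := by
  simp only [netInflow_apply, sum_sub_distrib, mul_sum]
  rw [sum_comm, sub_self]

lemma netInflow_eq_zero_of_forall_nonneg {p : ι → ℝ} (h : ∀ j, 0 ≤ netInflow b p j) :
    netInflow b p = 0 :=
  funext fun j => (sum_eq_zero_iff_of_nonneg fun j _ => h j).1 (sum_netInflow b p) j (mem_univ j)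

lemma exists_ne_zero_netInflow_eq_zero [Nonempty ι] : ∃ p ≠ 0, netInflow b p = 0 := by
  have hsurj : ¬ Function.Surjective (netInflow b) := fun h => by
    obtain ⟨p, hp⟩ := h 1
    have := sum_netInflow b p
    simp [hp] at this
  rw [← LinearMap.injective_iff_surjective, injective_iff_map_eq_zero] at hsurj
  push Not at hsurj
  obtain ⟨p, hp, hne⟩ := hsurj
  exact ⟨p, hne, hp⟩

variable {b}

lemma netInflow_abs_eq_zero (hb : ∀ i j, 0 ≤ b i j) {p : ι → ℝ} (hp : netInflow b p = 0) :
    netInflow b (fun i => |p i|) = 0 := by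
  refine netInflow_eq_zero_of_forall_nonneg b fun j => ?_
  have hbal : p j * ∑ i, b j i = ∑ i, p i * b i j :=
    (sub_eq_zero.1 (congrFun hp j)).symm
  rw [netInflow_apply, sub_nonneg]
  calc |p j| * ∑ i, b j i = |∑ i, p i * b i j| := by
        rw [← hbal, abs_mul, abs_of_nonneg (sum_nonneg fun i _ => hb j i)]
    _ ≤ ∑ i, |p i * b i j| := abs_sum_le_sum_abs _ _
    _ = ∑ i, |p i| * b i j := by simp only [abs_mul, abs_of_nonneg (hb _ j)]

lemma pos_of_transGen (hb : ∀ i j, 0 ≤ b i j) {p : ι → ℝ} (hp₀ : 0 ≤ p)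
    (hp : netInflow b p = 0) {i j : ι} (hij : TransGen (fun i j => 0 < b i j) i j)
    (hi : 0 < p i) : 0 < p j := by
  have step : ∀ i j, 0 < b i j → 0 < p i → 0 < p j := fun i j hbij hi => by
    refine (hp₀ j).lt_of_ne fun hj => ?_
    have hin : ∑ k, p k * b k j = 0 := by
      rw [sub_eq_zero.1 (congrFun hp j), ← hj, Pi.zero_apply, zero_mul]
    have := (sum_eq_zero_iff_of_nonneg fun k _ => mul_nonneg (hp₀ k) (hb k j)).1 hin i
      (mem_univ i)
    exact (mul_pos hi hbij).ne' this
  induction hij with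
  | single hbij => exact step _ _ hbij hi
  | tail _ hbij ih => exact step _ _ hbij ih

lemma pos_of_netInflow_eq_zero (hb : ∀ i j, 0 ≤ b i j)
    (hconn : ∀ i j, i ≠ j → TransGen (fun i j => 0 < b i j) i j) {p : ι → ℝ} (hp₀ : 0 ≤ p)
    (hne : p ≠ 0) (hp : netInflow b p = 0) (j : ι) : 0 < p j := by
  obtain ⟨i, hi⟩ := Function.ne_iff.1 hne
  have hi : 0 < p i := (hp₀ i).lt_of_ne (Ne.symm hi)
  rcases eq_or_ne i j with rfl | hij
  · exact hi
  · exact pos_of_transGen hb hp₀ hp (hconn i j hij) hi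

lemma exists_pos_netInflow_eq_zero (hb : ∀ i j, 0 ≤ b i j)
    (hconn : ∀ i j, i ≠ j → TransGen (fun i j => 0 < b i j) i j) :
    ∃ p : ι → ℝ, (∀ i, 0 < p i) ∧ netInflow b p = 0 := by
  cases isEmpty_or_nonempty ι
  · exact ⟨0, isEmptyElim, map_zero _⟩
  obtain ⟨p, hne, hp⟩ := exists_ne_zero_netInflow_eq_zero b
  have habs_ne : (fun i => |p i|) ≠ 0 := fun h =>
    hne (funext fun i => abs_eq_zero.1 (congrFun h i))
  exact ⟨_, pos_of_netInflow_eq_zero hb hconn (fun i => abs_nonneg (p i)) habs_ne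
    (netInflow_abs_eq_zero hb hp), netInflow_abs_eq_zero hb hp⟩

lemma exists_pos_smul_eq_of_netInflow_eq_zero (hb : ∀ i j, 0 ≤ b i j)
    (hconn : ∀ i j, i ≠ j → TransGen (fun i j => 0 < b i j) i j) {p q : ι → ℝ}
    (hp₀ : ∀ i, 0 < p i) (hp : netInflow b p = 0) (hq₀ : ∀ i, 0 < q i)
    (hq : netInflow b q = 0) : ∃ c : ℝ, 0 < c ∧ q = c • p := by
  cases isEmpty_or_nonempty ι
  · exact ⟨1, one_pos, Subsingleton.elim _ _⟩
  obtain ⟨j, -, hj⟩ := exists_min_image univ (fun j => q j / p j) univ_nonempty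
  set c := q j / p j
  refine ⟨c, div_pos (hq₀ j) (hp₀ j), ?_⟩
  have hr₀ : 0 ≤ q - c • p := fun i => by
    have := hj i (mem_univ i)
    rw [le_div_iff₀ (hp₀ i)] at this
    simpa using this
  have hrj : (q - c • p) j = 0 := by
    simp [c, div_mul_cancel₀ _ (hp₀ j).ne']
  have hr : netInflow b (q - c • p) = 0 := by
    rw [map_sub, map_smul, hp, hq, smul_zero, sub_zero]
  by_contra hne
  exact (pos_of_netInflow_eq_zero hb hconn hr₀ (sub_ne_zero.2 hne) hr j).ne' hrj

end GraphPrice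

open GraphPrice in
theorem graph_price_exists_unique_general {m : ℕ} (G : Fin m → Fin m → Prop)
    (hconn : ∀ i j : Fin m, i ≠ j → Relation.TransGen G i j)
    (b : Fin m → Fin m → ℝ)
    (hbpos : ∀ i j, G i j → 0 < b i j) (hb0 : ∀ i j, ¬ G i j → b i j = 0) :
    ∃ p : Fin m → ℝ,
      ((∀ i, 0 < p i) ∧ ∀ j, ∑ i, p i * b i j = ∑ i, p j * b j i) ∧
      ∀ q : Fin m → ℝ,
        ((∀ i, 0 < q i) ∧ ∀ j, ∑ i, q i * b i j = ∑ i, q j * b j i) →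
        ∃ c : ℝ, 0 < c ∧ q = c • p := by
  have hb : ∀ i j, 0 ≤ b i j := fun i j => by
    by_cases h : G i j
    exacts [(hbpos i j h).le, (hb0 i j h).ge]
  have hconn' : ∀ i j, i ≠ j → TransGen (fun i j => 0 < b i j) i j :=
    fun i j hij => TransGen.mono hbpos i j (hconn i j hij)
  obtain ⟨p, hp₀, hp⟩ := exists_pos_netInflow_eq_zero hb hconn'
  refine ⟨p, ⟨hp₀, (netInflow_eq_zero_iff b p).1 hp⟩, fun q ⟨hq₀, hq⟩ => ?_⟩
  exact exists_pos_smul_eq_of_netInflow_eq_zero hb hconn' hp₀ hp hq₀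
    ((netInflow_eq_zero_iff b q).2 hq)

/-- Existence and uniqueness of prices for a graphical mechanism.
Let `G` be a connected directed graph without loops on the vertex set `{1,…,m}` (here
`Fin m`; connectedness: for any two distinct vertices there is a directed path, i.e. the
transitive closure relates them), and let `b = (b_ij)` be a nonnegative `m×m` matrix with
`b_ij > 0` for every edge `ij ∈ G` and `b_ij = 0` for `ij ∉ G`.  Then there exists a
strictly positive vector `p ∈ ℝ₊₊^m`, unique up to multiplication by a positive scalar,
satisfying `Σ_i p_i·b_ij = Σ_i p_j·b_ji` for all `j`. -/
theorem graph_price_exists_unique {m : ℕ} (G : Fin m → Fin m → Prop)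
    (hirr : ∀ i, ¬ G i i)
    (hconn : ∀ i j : Fin m, i ≠ j → Relation.TransGen G i j)
    (b : Fin m → Fin m → ℝ)
    (hbpos : ∀ i j, G i j → 0 < b i j) (hb0 : ∀ i j, ¬ G i j → b i j = 0) :
    ∃ p : Fin m → ℝ,
      ((∀ i, 0 < p i) ∧ ∀ j, ∑ i, p i * b i j = ∑ i, p j * b j i) ∧
      ∀ q : Fin m → ℝ,
        ((∀ i, 0 < q i) ∧ ∀ j, ∑ i, q i * b i j = ∑ i, q j * b j i) →
        ∃ c : ℝ, 0 < c ∧ q = c • p :=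
  graph_price_exists_unique_general G hconn b hbpos hb0
end

section
/- Let M ∈ 𝔐(m) and let N_b (b ∈ S₊) be its associated column-stochastic matrices. Then: (1) if h ∈ K_i is a pure ij-index, the h-th column of N_b equals the j-th unit vector e_j, independently of b; (2) for every i and every b, each column of N_b indexed by K_i is a linear combination of the columns of N_b indexed by pure indices in K_i. -/
/-! By Invariance, rescaling commodity `ind h` by `b h` turns the trade of the offer `b h • e_h`
in the market `b` into the return to the unit offer `e_h` against an admissible counter-offer, up
to positive factors in each commodity. Reading the same trade through `N_b` shows that the `h`-th
column of `N_b` is an entrywise positive multiple of that return vector. Hence the column of a pure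
`ij`-index is supported on `j`, and column-stochasticity makes it `e_j`; and if a column indexed by
`h ∈ K_i` has a nonzero entry `j`, then `h` is an `ij`-index, so by Flexibility some pure `ij`-index
in `K_i` has column `e_j`. -/

open Finset

theorem exists_eq_sum_smul_of_single_mem {ι κ R : Type*} [Fintype ι] [Fintype κ] [DecidableEq κ]
    [Semiring R] (col : ι → κ → R) (S : Set ι) (v : κ → R)
    (hv : ∀ j, v j ≠ 0 → ∃ h ∈ S, col h = Pi.single j 1) :
    ∃ coef : ι → R, (∀ h, coef h ≠ 0 → h ∈ S) ∧ v = ∑ h, coef h • col h := by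
  have hmem : v ∈ Submodule.span R (col '' S) := by
    rw [← Finset.univ_sum_single v]
    refine Submodule.sum_mem _ fun j _ => ?_
    by_cases hj : v j = 0
    · simp [hj]
    obtain ⟨h, hS, hcol⟩ := hv j hj
    rw [← mul_one (v j), ← smul_eq_mul, Pi.single_smul, ← hcol]
    exact Submodule.smul_mem _ _ (Submodule.subset_span ⟨h, hS, rfl⟩)
  obtain ⟨l, hl, rfl⟩ := (Finsupp.mem_span_image_iff_linearCombination R).1 hmem
  refine ⟨l, fun h hh => hl (Finsupp.mem_support_iff.2 hh), ?_⟩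
  rw [Finsupp.linearCombination_apply, Finsupp.sum_fintype _ _ fun i => zero_smul R (col i)]

namespace ExchangeMechanism

variable {m : ℕ} (M : ExchangeMechanism m)

theorem scaleS_scaleS (lam mu : Fin m → ℝ) (a : M.K → ℝ) :
    M.scaleS lam (M.scaleS mu a) = M.scaleS (lam * mu) a := by
  ext h
  simp only [scaleS, Pi.mul_apply, mul_assoc]

theorem scaleS_one (a : M.K → ℝ) : M.scaleS 1 a = a := by
  ext h
  simp [scaleS]

theorem scaleS_unit (lam : Fin m → ℝ) (h : M.K) :
    M.scaleS lam (M.unit h) = lam (M.ind h) • M.unit h := by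
  ext h'
  by_cases e : h' = h <;> simp [scaleS, unit, e]

theorem scaleS_update (lam : Fin m → ℝ) (a : M.K → ℝ) (h : M.K) (x : ℝ) :
    M.scaleS lam (Function.update a h x) =
      Function.update (M.scaleS lam a) h (lam (M.ind h) * x) := by
  ext h'
  by_cases e : h' = h <;> simp [scaleS, e]

theorem pos_scaleS {lam : Fin m → ℝ} (hlam : ∀ i, 0 < lam i) {a : M.K → ℝ} (ha : M.Pos a) :
    M.Pos (M.scaleS lam a) :=
  fun h => mul_pos (hlam _) (ha h)

theorem sub_smul_unit {b : M.K → ℝ} (h : M.K) : b - b h • M.unit h = Function.update b h 0 := by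
  ext h'
  by_cases e : h' = h <;> simp [unit, e]

theorem valid_unit_update {c : M.K → ℝ} (hc : M.Pos c) (h : M.K) :
    M.Valid 2 ![M.unit h, Function.update c h 0] := by
  refine ⟨fun k => ?_, fun h' => ?_⟩
  · fin_cases k <;> intro h' <;> by_cases e : h' = h <;> simp [unit, e, (hc h').le]
  · by_cases e : h' = h <;> simp [unit, e, hc h']

theorem exists_trade_smul_unit_eq_mul_ret (hInv : M.Invariant) {b : M.K → ℝ} (hb : M.Pos b)
    (h : M.K) :
    ∃ lam : Fin m → ℝ, (∀ i, 0 < lam i) ∧ ∃ a, M.Valid 2 ![M.unit h, a] ∧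
      ∀ k, M.trade (b h • M.unit h) b k = lam k * M.ret (M.unit h) a k := by
  set lam : Fin m → ℝ := Pi.mulSingle (M.ind h) (b h) with hlam_def
  have hlam : ∀ i, 0 < lam i := fun i => by
    rw [hlam_def, Pi.mulSingle_apply]
    split_ifs
    exacts [hb h, one_pos]
  have hlam_inv : lam * lam⁻¹ = 1 := funext fun i => mul_inv_cancel₀ (hlam i).ne'
  set a := Function.update (M.scaleS lam⁻¹ b) h 0
  have ha : M.Valid 2 ![M.unit h, a] :=
    M.valid_unit_update (M.pos_scaleS (fun i => inv_pos.2 (hlam i)) hb) h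
  have hscale : (fun k => M.scaleS lam (![M.unit h, a] k)) =
      ![b h • M.unit h, b - b h • M.unit h] := by
    funext k
    fin_cases k
    · simp [scaleS_unit, hlam_def]
    · simp [a, scaleS_update, scaleS_scaleS, hlam_inv, scaleS_one, sub_smul_unit]
  refine ⟨lam, hlam, a, ha, fun k => ?_⟩
  have := congrFun (congrFun (hInv 2 ![M.unit h, a] lam hlam ha) 0) k
  rwa [hscale] at this

/-- `r(·, b) = D_q⁻¹ · Nb · E_q` on offers `a ≤ b`. -/
def IsTradeMatrixAt (b : M.K → ℝ) (q : Fin m → ℝ) (Nb : Fin m → M.K → ℝ) : Prop :=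
  ∀ a, M.Nonneg a → a ≤ b → ∀ i, M.trade a b i = (q i)⁻¹ * ∑ h, Nb i h * (q (M.ind h) * a h)

section TradeMatrix

variable {b : M.K → ℝ} {q : Fin m → ℝ} {Nb : Fin m → M.K → ℝ}

theorem trade_smul_unit_eq_column (hN : M.IsTradeMatrixAt b q Nb) (hb : M.Pos b) (h : M.K)
    (k : Fin m) :
    M.trade (b h • M.unit h) b k = (q k)⁻¹ * (Nb k h * (q (M.ind h) * b h)) := by
  have hnonneg : M.Nonneg (b h • M.unit h) := fun h' => by
    by_cases e : h' = h <;> simp [unit, e, (hb h).le]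
  have hle : b h • M.unit h ≤ b := fun h' => by
    by_cases e : h' = h <;> simp [unit, e, (hb h').le]
  rw [hN _ hnonneg hle k, Finset.sum_eq_single h (fun h' _ e => by simp [unit, e]) (by simp)]
  simp [unit]

theorem exists_column_eq_pos_mul_ret (hInv : M.Invariant) (hb : M.Pos b)
    (hq : ∀ i, 0 < q i) (hN : M.IsTradeMatrixAt b q Nb)
    (h : M.K) :
    ∃ a, M.Valid 2 ![M.unit h, a] ∧ ∀ k, ∃ c, 0 < c ∧ Nb k h = c * M.ret (M.unit h) a k := by
  obtain ⟨lam, hlam, a, ha, htrade⟩ := M.exists_trade_smul_unit_eq_mul_ret hInv hb h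
  refine ⟨a, ha, fun k => ⟨q k * lam k / (q (M.ind h) * b h), ?_, ?_⟩⟩
  · exact div_pos (mul_pos (hq k) (hlam k)) (mul_pos (hq _) (hb h))
  · have hcol := M.trade_smul_unit_eq_column hN hb h k
    rw [htrade] at hcol
    have hqk := (hq k).ne'
    have hqh := (hq (M.ind h)).ne'
    have hbh := (hb h).ne'
    field_simp at hcol ⊢
    linarith

theorem column_eq_single_of_isPureIJIndex (hInv : M.Invariant) (hb : M.Pos b)
    (hq : ∀ i, 0 < q i) (hN : M.IsTradeMatrixAt b q Nb)
    {i j : Fin m} {h : M.K} (hstoch : ∑ k, Nb k h = 1) (hpure : M.IsPureIJIndex i j h) :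
    (fun k => Nb k h) = Pi.single j 1 := by
  obtain ⟨a, ha, hcol⟩ := M.exists_column_eq_pos_mul_ret hInv hb hq hN h
  have hzero : ∀ k ≠ j, Nb k h = 0 := fun k hk => by
    obtain ⟨c, -, hc⟩ := hcol k
    rw [hc, hpure.2 a ha k hk, mul_zero]
  have hone : Nb j h = 1 := by
    rwa [Finset.sum_eq_single j (fun k _ => hzero k) (by simp)] at hstoch
  funext k
  by_cases e : k = j
  · subst e
    simp [hone]
  · simp [e, hzero k e]

theorem exists_isPureIJIndex_of_column_pos (hInv : M.Invariant) (hFlex : M.Flexible)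
    (hb : M.Pos b) (hq : ∀ i, 0 < q i) (hN : M.IsTradeMatrixAt b q Nb)
    {j : Fin m} {h : M.K} (hpos : 0 < Nb j h) :
    ∃ h', M.IsPureIJIndex (M.ind h) j h' := by
  obtain ⟨a, ha, hcol⟩ := M.exists_column_eq_pos_mul_ret hInv hb hq hN h
  obtain ⟨c, hc, hcj⟩ := hcol j
  rw [hcj] at hpos
  exact hFlex _ _ ⟨h, rfl, a, ha, pos_of_mul_pos_right hpos hc.le⟩

end TradeMatrix

end ExchangeMechanism

theorem columns_of_Nb_general {m : ℕ} (M : ExchangeMechanism m)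
    (nu' : (M.K → ℝ) → (M.K → ℝ) → Fin m → ℝ) (hM : M.MemM nu')
    (p : (M.K → ℝ) → Fin m → ℝ)
    (hppos : ∀ b, M.Pos b → ∀ i, 0 < p b i)
    (N : (M.K → ℝ) → Fin m → M.K → ℝ)
    (hNpos : ∀ b, M.Pos b → ∀ i h, 0 ≤ N b i h)
    (hNstoch : ∀ b, M.Pos b → ∀ h, ∑ i, N b i h = 1)
    (hNret : ∀ a b, M.Nonneg a → M.Pos b → a ≤ b → ∀ i,
      M.trade a b i = (p b i)⁻¹ * ∑ h : M.K, N b i h * (p b (M.ind h) * a h)) :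
    (∀ (i j : Fin m) (h : M.K), M.IsPureIJIndex i j h →
      ∀ b, M.Pos b → ∀ i' : Fin m, N b i' h = if i' = j then 1 else 0) ∧
    (∀ (i : Fin m) (b : M.K → ℝ), M.Pos b → ∀ h : M.K, M.ind h = i →
      ∃ coef : M.K → ℝ,
        (∀ h', coef h' ≠ 0 → M.ind h' = i ∧ ∃ j, M.IsPureIJIndex i j h') ∧
        ∀ i' : Fin m, N b i' h = ∑ h' : M.K, coef h' * N b i' h') := by
  obtain ⟨-, -, -, hInv, -, hFlex, -, -⟩ := hM
  have hrep : ∀ b, M.Pos b → M.IsTradeMatrixAt b (p b) (N b) :=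
    fun b hb a ha hle => hNret a b ha hb hle
  have hpure : ∀ (i j : Fin m) (h : M.K), M.IsPureIJIndex i j h → ∀ b, M.Pos b →
      (fun k => N b k h) = Pi.single j 1 := fun i j h hh b hb =>
    M.column_eq_single_of_isPureIJIndex hInv hb (hppos b hb) (hrep b hb) (hNstoch b hb h) hh
  refine ⟨fun i j h hh b hb i' => (congrFun (hpure i j h hh b hb) i').trans (Pi.single_apply ..),
    fun i b hb h hi => ?_⟩
  obtain ⟨coef, hS, hsum⟩ := exists_eq_sum_smul_of_single_mem (fun h' k => N b k h')
    {h' | M.ind h' = i ∧ ∃ j, M.IsPureIJIndex i j h'} (fun k => N b k h) fun j hj => by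
      obtain ⟨h', hh'⟩ := M.exists_isPureIJIndex_of_column_pos hInv hFlex hb (hppos b hb)
        (hrep b hb) ((hNpos b hb j h).lt_of_ne' hj)
      rw [hi] at hh'
      exact ⟨h', ⟨hh'.1.1, j, hh'⟩, hpure i j h' hh' b hb⟩
  exact ⟨coef, hS, fun i' => by simpa using congrFun hsum i'⟩

/-- Columns of `N_b`.  Let `M ∈ 𝔐(m)` and let `N_b` (`b ∈ S₊`) be its
associated nonnegative column-stochastic matrices, i.e. those representing the trade
function as `r(a,b) = D_{p(b)}⁻¹·N_b·E_{p(b)}·a`.  Then: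
(1) if `h ∈ K_i` is a pure `ij`-index, the `h`-th column of `N_b` equals the `j`-th unit
vector `e_j`, independently of `b`;
(2) for every `i` and every `b`, each column of `N_b` indexed by `K_i` is a linear
combination of the columns of `N_b` indexed by pure indices in `K_i`. -/
theorem columns_of_Nb {m : ℕ} (M : ExchangeMechanism m)
    (nu' : (M.K → ℝ) → (M.K → ℝ) → Fin m → ℝ) (hM : M.MemM nu')
    (p : (M.K → ℝ) → Fin m → ℝ)
    (hppos : ∀ b, M.Pos b → ∀ i, 0 < p b i)
    (hpval : ∀ a b, M.Nonneg a → M.Pos b → ∑ i, p b i * nu' a b i = 0)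
    (N : (M.K → ℝ) → Fin m → M.K → ℝ)
    (hNpos : ∀ b, M.Pos b → ∀ i h, 0 ≤ N b i h)
    (hNstoch : ∀ b, M.Pos b → ∀ h, ∑ i, N b i h = 1)
    (hNret : ∀ a b, M.Nonneg a → M.Pos b → a ≤ b → ∀ i,
      M.trade a b i = (p b i)⁻¹ * ∑ h : M.K, N b i h * (p b (M.ind h) * a h)) :
    (∀ (i j : Fin m) (h : M.K), M.IsPureIJIndex i j h →
      ∀ b, M.Pos b → ∀ i' : Fin m, N b i' h = if i' = j then 1 else 0) ∧
    (∀ (i : Fin m) (b : M.K → ℝ), M.Pos b → ∀ h : M.K, M.ind h = i →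
      ∃ coef : M.K → ℝ,
        (∀ h', coef h' ≠ 0 → M.ind h' = i ∧ ∃ j, M.IsPureIJIndex i j h') ∧
        ∀ i' : Fin m, N b i' h = ∑ h' : M.K, coef h' * N b i' h') :=
  columns_of_Nb_general M nu' hM p hppos N hNpos hNstoch hNret
end
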